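/- arXiv:0909.1932 — 4 statements merged into one kernel-verified Lean document; each statement's English description precedes it below -/
import Mathlib

section
/- For every real y ≥ 0 and every integer n ≥ 2, 𝒫_n(y)² + 𝒫_n(−y)² ≤ (2n² + 4(n−1)(3n−2)y²) / n^n. -/
noncomputable section

/-- `𝒫_n(y) = (√(1+y²)+y)^{n-1} / (1+(n-1)(√(1+y²)+y)²)^{(n-2)/2}`. -/
def P (n : ℕ) (y : ℝ) : ℝ :=
  (Real.sqrt (1 + y ^ 2) + y) ^ (n - 1) /
    (1 + ((n : ℝ) - 1) * (Real.sqrt (1 + y ^ 2) + y) ^ 2) ^ (((n : ℝ) - 2) / 2)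

open Real Set Filter Topology

/-!
Write `s = √(1 + y²) + y = exp (arsinh y)` and `t = s²`. Then `𝒫_{k+2}(y)² = sqP k t`, the
reflection `y ↦ -y` becomes `t ↦ t⁻¹`, and `4y² = t - 2 + t⁻¹`, so the claim is `0 ≤ phi k t`.
Since `phi k` is invariant under `t ↦ t⁻¹` we may take `t ≥ 1`. There `phi`, `psi` and `sigma`
all vanish at `t = 1`, `phi' = (k + 1)(t + 1)/t² · psi`, `psi' = sigma`, and `sigma'` has the
sign of `1 - rho`. As `rho 1 = 1` and `rho` decreases and then increases, `sigma` increases and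
then decreases, so it stays above `min (sigma 1) (lim sigma)`, and this limit is nonnegative
because `(k + 2)^(k + 2) ≤ (3k + 4)(k + 1)^(k + 1)`, which follows from `(1 + 1/m)^m ≤ e`.
-/

theorem monotoneOn_of_hasDerivAt_nonneg {D : Set ℝ} (hD : Convex ℝ D) {f f' : ℝ → ℝ}
    (hf : ∀ x ∈ D, HasDerivAt f (f' x) x) (hf' : ∀ x ∈ interior D, 0 ≤ f' x) :
    MonotoneOn f D :=
  monotoneOn_of_hasDerivWithinAt_nonneg hD (fun x hx ↦ (hf x hx).continuousAt.continuousWithinAt)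
    (fun x hx ↦ (hf x (interior_subset hx)).hasDerivWithinAt) hf'

theorem antitoneOn_of_hasDerivAt_nonpos {D : Set ℝ} (hD : Convex ℝ D) {f f' : ℝ → ℝ}
    (hf : ∀ x ∈ D, HasDerivAt f (f' x) x) (hf' : ∀ x ∈ interior D, f' x ≤ 0) :
    AntitoneOn f D :=
  antitoneOn_of_hasDerivWithinAt_nonpos hD (fun x hx ↦ (hf x hx).continuousAt.continuousWithinAt)
    (fun x hx ↦ (hf x (interior_subset hx)).hasDerivWithinAt) hf'

section ValleyShaped

variable {α β : Type*} [LinearOrder α] [LinearOrder β] {f : α → β} {a r x b : α}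

theorem le_max_of_antitoneOn_of_monotoneOn (h₁ : AntitoneOn f (Icc a r))
    (h₂ : MonotoneOn f (Ici r)) (hax : a ≤ x) (hxb : x ≤ b) : f x ≤ max (f a) (f b) := by
  rcases le_total x r with hxr | hrx
  · exact le_max_of_le_left (h₁ ⟨le_rfl, hax.trans hxr⟩ ⟨hax, hxr⟩ hax)
  · exact le_max_of_le_right (h₂ hrx (hrx.trans hxb) hxb)

theorem le_of_antitoneOn_of_monotoneOn (h₁ : AntitoneOn f (Icc a r))
    (h₂ : MonotoneOn f (Ici r)) (hab : a ≤ b) (hfab : f a < f b) (hbx : b ≤ x) : f b ≤ f x := by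
  have hrb : r ≤ b := by
    by_contra! hbr
    exact (h₁ ⟨le_rfl, hab.trans hbr.le⟩ ⟨hab, hbr.le⟩ hab).not_gt hfab
  exact h₂ hrb (hrb.trans hbx) hbx

end ValleyShaped

theorem add_two_pow_le (k : ℕ) : (k + 2 : ℝ) ^ (k + 2) ≤ (3 * k + 4) * (k + 1) ^ (k + 1) := by
  -- `(k + 2) e ≤ 3k + 4` only holds from `k = 6` on; smaller `k` are checked numerically.
  rcases le_or_gt k 5 with hk | hk
  · interval_cases k <;> norm_num
  have hk : (6 : ℝ) ≤ k := by exact_mod_cast hk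
  have he : (1 + ((k + 1 : ℕ) : ℝ)⁻¹) ^ (k + 1) ≤ exp 1 := one_add_inv_pow_le_exp
  have hsplit : (k + 2 : ℝ) ^ (k + 2) =
      (k + 2) * (1 + ((k + 1 : ℕ) : ℝ)⁻¹) ^ (k + 1) * (k + 1) ^ (k + 1) := by
    push_cast
    rw [mul_assoc, ← mul_pow]
    field_simp
    ring
  rw [hsplit]
  gcongr
  nlinarith [exp_one_lt_d9]

theorem four_mul_sq_eq_exp_arsinh (y : ℝ) :
    4 * y ^ 2 = exp (arsinh y) ^ 2 - 2 + (exp (arsinh y) ^ 2)⁻¹ := by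
  nth_rewrite 1 [← sinh_arsinh y]
  rw [sinh_eq, exp_neg]
  field_simp
  ring

namespace PSqBound

def sqP (k : ℕ) (t : ℝ) : ℝ := t ^ (k + 1) / (1 + (k + 1) * t) ^ k

def phi (k : ℕ) (t : ℝ) : ℝ :=
  (2 * (k + 2) ^ 2 + (k + 1) * (3 * k + 4) * (t - 2 + t⁻¹)) / (k + 2) ^ (k + 2)
    - sqP k t - sqP k t⁻¹

def psi (k : ℕ) (t : ℝ) : ℝ :=
  (3 * k + 4) * (t - 1) / (k + 2) ^ (k + 2) + 1 / (t + (k + 1)) ^ (k + 1)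
    - t ^ (k + 2) / (1 + (k + 1) * t) ^ (k + 1)

def sigma (k : ℕ) (t : ℝ) : ℝ :=
  (3 * k + 4) / (k + 2) ^ (k + 2) - (k + 1) / (t + (k + 1)) ^ (k + 2)
    - t ^ (k + 1) * (k + 2 + (k + 1) * t) / (1 + (k + 1) * t) ^ (k + 2)

def rho (k : ℕ) (t : ℝ) : ℝ := t ^ k * (t + (k + 1)) ^ (k + 3) / (1 + (k + 1) * t) ^ (k + 3)

variable (k : ℕ) {t : ℝ}

theorem hasDerivAt_sqP (ht : 0 < t) :
    HasDerivAt (sqP k) ((k + 1) * t ^ k * (t + 1) / (1 + (k + 1) * t) ^ (k + 1)) t := by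
  refine ((hasDerivAt_pow (k + 1) t).div ((((hasDerivAt_id' t).const_mul (k + 1 : ℝ)).const_add
    1).fun_pow k) (by positivity)).congr_deriv ?_
  rcases k with _ | k
  · simp
    field_simp
    ring
  · push_cast [Nat.add_sub_cancel]
    field_simp
    ring

theorem hasDerivAt_sqP_inv (ht : 0 < t) :
    HasDerivAt (fun t ↦ sqP k t⁻¹) (-((k + 1) * (t + 1) / (t ^ 2 * (t + (k + 1)) ^ (k + 1))))
      t := by
  refine ((hasDerivAt_sqP k (inv_pos.2 ht)).comp t (hasDerivAt_inv ht.ne')).congr_deriv ?_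
  rw [show 1 + (k + 1) * t⁻¹ = (t + (k + 1)) / t by field_simp, div_pow, inv_pow]
  field_simp
  ring

theorem hasDerivAt_phi (ht : 0 < t) :
    HasDerivAt (phi k) ((k + 1) * (t + 1) / t ^ 2 * psi k t) t := by
  refine (((((((hasDerivAt_id' t).sub_const 2).add (hasDerivAt_inv ht.ne')).const_mul
    ((k + 1) * (3 * k + 4) : ℝ)).const_add (2 * (k + 2) ^ 2 : ℝ)).div_const
    ((k + 2 : ℝ) ^ (k + 2))).sub (hasDerivAt_sqP k ht) |>.sub
    (hasDerivAt_sqP_inv k ht)).congr_deriv ?_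
  simp only [psi]
  field_simp
  ring

theorem hasDerivAt_psi (ht : 0 < t) : HasDerivAt (psi k) (sigma k t) t := by
  refine (((((hasDerivAt_id' t).sub_const 1).const_mul (3 * k + 4 : ℝ)).div_const
    ((k + 2 : ℝ) ^ (k + 2))).add ((hasDerivAt_const t (1 : ℝ)).div
      (((hasDerivAt_id' t).add_const (k + 1 : ℝ)).fun_pow (k + 1)) (by positivity)) |>.sub
    ((hasDerivAt_pow (k + 2) t).div
      ((((hasDerivAt_id' t).const_mul (k + 1 : ℝ)).const_add 1).fun_pow (k + 1))
      (by positivity))).congr_deriv ?_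
  simp only [sigma, Nat.add_sub_cancel]
  push_cast
  field_simp
  ring

theorem hasDerivAt_sigma (ht : 0 < t) :
    HasDerivAt (sigma k) ((k + 2) * (k + 1) * (1 - rho k t) / (t + (k + 1)) ^ (k + 3)) t := by
  refine (((hasDerivAt_const t ((3 * k + 4) / (k + 2 : ℝ) ^ (k + 2))).sub
    ((hasDerivAt_const t (k + 1 : ℝ)).div
      (((hasDerivAt_id' t).add_const (k + 1 : ℝ)).fun_pow (k + 2)) (by positivity))).sub
    (((hasDerivAt_pow (k + 1) t).mul (((hasDerivAt_id' t).const_mul (k + 1 : ℝ)).const_add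
      (k + 2 : ℝ))).div
      ((((hasDerivAt_id' t).const_mul (k + 1 : ℝ)).const_add 1).fun_pow (k + 2))
      (by positivity))).congr_deriv ?_
  simp only [rho, Nat.add_sub_cancel, Pi.mul_apply]
  push_cast
  field_simp
  ring

theorem hasDerivAt_rho (ht : 0 < t) :
    HasDerivAt (rho k) (k * ((k + 1) * t ^ 2 - (3 * k + 4) * t + (k + 1)) * rho k t /
      (t * (t + (k + 1)) * (1 + (k + 1) * t))) t := by
  refine (((hasDerivAt_pow k t).mul (((hasDerivAt_id' t).add_const (k + 1 : ℝ)).fun_pow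
    (k + 3))).div ((((hasDerivAt_id' t).const_mul (k + 1 : ℝ)).const_add 1).fun_pow (k + 3))
    (by positivity)).congr_deriv ?_
  rcases k with _ | k
  · simp [rho]
    left
    ring
  · simp only [rho, Nat.add_sub_cancel, Pi.mul_apply, show k + 1 + 3 - 1 = k + 3 from rfl]
    push_cast
    field_simp
    ring

theorem phi_one : phi k 1 = 0 := by
  norm_num [phi, sqP]
  field_simp
  ring

theorem psi_one : psi k 1 = 0 := by
  norm_num [psi]

theorem sigma_one : sigma k 1 = 0 := by
  norm_num [sigma]
  field_simp
  ring

theorem rho_one : rho k 1 = 1 := by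
  rw [rho, one_pow, one_mul, mul_one, add_comm, div_self (by positivity)]

def rhoCrit (k : ℕ) : ℝ := (3 * k + 4 + √((k + 2) * (5 * k + 6))) / (2 * (k + 1))

theorem quad_eq_mul (t : ℝ) :
    (k + 1) * t ^ 2 - (3 * k + 4) * t + (k + 1) =
      (k + 1) * (t - rhoCrit k) *
        (t - (3 * k + 4 - √((k + 2) * (5 * k + 6))) / (2 * (k + 1))) := by
  rw [rhoCrit]
  set d := √((k + 2) * (5 * k + 6) : ℝ)
  have hd : d ^ 2 = (k + 2) * (5 * k + 6) := sq_sqrt (by positivity)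
  field_simp
  linear_combination hd

theorem quad_nonpos (h₁ : 1 ≤ t) (h₂ : t ≤ rhoCrit k) :
    (k + 1) * t ^ 2 - (3 * k + 4) * t + (k + 1) ≤ 0 := by
  have hD : (k + 2 : ℝ) ≤ √((k + 2) * (5 * k + 6)) :=
    le_sqrt_of_sq_le (by nlinarith [(k.cast_nonneg : (0 : ℝ) ≤ k)])
  have hr : (3 * k + 4 - √((k + 2) * (5 * k + 6))) / (2 * (k + 1)) ≤ t := by
    rw [div_le_iff₀ (by positivity)]
    nlinarith
  rw [quad_eq_mul]
  exact mul_nonpos_of_nonpos_of_nonneg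
    (mul_nonpos_of_nonneg_of_nonpos (by positivity) (by linarith)) (by linarith)

theorem quad_nonneg (h : rhoCrit k ≤ t) : 0 ≤ (k + 1) * t ^ 2 - (3 * k + 4) * t + (k + 1) := by
  have hr : (3 * k + 4 - √((k + 2) * (5 * k + 6))) / (2 * (k + 1)) ≤ rhoCrit k := by
    rw [rhoCrit]
    gcongr
    linarith [sqrt_nonneg ((k + 2) * (5 * k + 6) : ℝ)]
  rw [quad_eq_mul]
  have := sub_nonneg.2 h
  have := sub_nonneg.2 (hr.trans h)
  positivity

theorem rho_nonneg (ht : 0 ≤ t) : 0 ≤ rho k t := by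
  unfold rho
  positivity

theorem antitoneOn_rho : AntitoneOn (rho k) (Icc 1 (rhoCrit k)) := by
  refine antitoneOn_of_hasDerivAt_nonpos (convex_Icc _ _)
    (fun x hx ↦ hasDerivAt_rho k (by linarith [hx.1])) fun x hx ↦ ?_
  rw [interior_Icc] at hx
  have hx₀ : 0 < x := by linarith [hx.1]
  have hQ := quad_nonpos k hx.1.le hx.2.le
  have hρ := rho_nonneg k hx₀.le
  apply div_nonpos_of_nonpos_of_nonneg _ (by positivity)
  exact mul_nonpos_of_nonpos_of_nonneg (mul_nonpos_of_nonneg_of_nonpos (by positivity) hQ) hρ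

theorem monotoneOn_rho : MonotoneOn (rho k) (Ici (rhoCrit k)) := by
  have hcrit : 1 ≤ rhoCrit k := by
    rw [rhoCrit, le_div_iff₀ (by positivity)]
    linarith [sqrt_nonneg ((k + 2) * (5 * k + 6) : ℝ)]
  refine monotoneOn_of_hasDerivAt_nonneg (convex_Ici _)
    (fun x hx ↦ hasDerivAt_rho k (by linarith [mem_Ici.1 hx])) fun x hx ↦ ?_
  rw [interior_Ici] at hx
  have hx₀ : 0 < x := by linarith [mem_Ioi.1 hx]
  have := quad_nonneg k (le_of_lt hx)
  have := rho_nonneg k hx₀.le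
  positivity

theorem tendsto_sigma_atTop :
    Tendsto (sigma k) atTop (𝓝 ((3 * k + 4) / (k + 2) ^ (k + 2) - 1 / (k + 1) ^ (k + 1))) := by
  have hcont : ContinuousAt (fun u : ℝ ↦ (3 * k + 4) / (k + 2) ^ (k + 2)
      - (k + 1) * u ^ (k + 2) / (1 + (k + 1) * u) ^ (k + 2)
      - ((k + 2) * u + (k + 1)) / (u + (k + 1)) ^ (k + 2)) 0 := by
    fun_prop (disch := positivity)
  convert (hcont.tendsto.comp tendsto_inv_atTop_zero).congr' ?_ using 2
  · simp only [mul_zero, zero_add, add_zero, zero_pow (Nat.succ_ne_zero _), zero_div, sub_zero]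
    field_simp
    ring
  · filter_upwards [eventually_gt_atTop 0] with t ht
    simp only [Function.comp_apply, sigma]
    field_simp
    simp only [div_pow]
    field_simp
    ring

theorem sigma_nonneg (ht : 1 ≤ t) : 0 ≤ sigma k t := by
  rcases le_or_gt (rho k t) 1 with hρ | hρ
  · have hmono : MonotoneOn (sigma k) (Icc 1 t) := by
      refine monotoneOn_of_hasDerivAt_nonneg (convex_Icc _ _)
        (fun x hx ↦ hasDerivAt_sigma k (by linarith [hx.1])) fun x hx ↦ ?_
      rw [interior_Icc] at hx
      have hρx := le_max_of_antitoneOn_of_monotoneOn (antitoneOn_rho k) (monotoneOn_rho k)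
        hx.1.le hx.2.le
      rw [rho_one, max_eq_left hρ] at hρx
      exact div_nonneg (mul_nonneg (by positivity) (sub_nonneg.2 hρx))
        (pow_nonneg (by linarith [hx.1]) _)
    simpa [sigma_one] using hmono ⟨le_rfl, ht⟩ ⟨ht, le_rfl⟩ ht
  · have hanti : AntitoneOn (sigma k) (Ici t) := by
      refine antitoneOn_of_hasDerivAt_nonpos (convex_Ici _)
        (fun x hx ↦ hasDerivAt_sigma k (by linarith [mem_Ici.1 hx])) fun x hx ↦ ?_
      rw [interior_Ici] at hx
      have hρx := le_of_antitoneOn_of_monotoneOn (antitoneOn_rho k) (monotoneOn_rho k) ht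
        (by rwa [rho_one]) (le_of_lt hx)
      exact div_nonpos_of_nonpos_of_nonneg
        (mul_nonpos_of_nonneg_of_nonpos (by positivity) (by linarith))
        (pow_nonneg (by linarith [mem_Ioi.1 hx]) _)
    have hlim := le_of_tendsto (tendsto_sigma_atTop k)
      ((eventually_ge_atTop t).mono fun x hx ↦ hanti self_mem_Ici hx hx)
    have hL : 1 / (k + 1 : ℝ) ^ (k + 1) ≤ (3 * k + 4) / (k + 2) ^ (k + 2) := by
      rw [div_le_div_iff₀ (by positivity) (by positivity), one_mul]
      exact add_two_pow_le k
    linarith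

theorem psi_nonneg (ht : 1 ≤ t) : 0 ≤ psi k t := by
  have hmono : MonotoneOn (psi k) (Ici 1) :=
    monotoneOn_of_hasDerivAt_nonneg (convex_Ici _)
      (fun x hx ↦ hasDerivAt_psi k (by linarith [mem_Ici.1 hx]))
      fun x hx ↦ sigma_nonneg k (by rw [interior_Ici] at hx; exact le_of_lt hx)
  simpa [psi_one] using hmono self_mem_Ici ht ht

theorem phi_nonneg_of_one_le (ht : 1 ≤ t) : 0 ≤ phi k t := by
  have hmono : MonotoneOn (phi k) (Ici 1) := by
    refine monotoneOn_of_hasDerivAt_nonneg (convex_Ici _)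
      (fun x hx ↦ hasDerivAt_phi k (by linarith [mem_Ici.1 hx])) fun x hx ↦ ?_
    rw [interior_Ici] at hx
    have := psi_nonneg k (le_of_lt hx)
    have : 0 < x := by linarith [mem_Ioi.1 hx]
    positivity
  simpa [phi_one] using hmono self_mem_Ici ht ht

theorem phi_inv : phi k t⁻¹ = phi k t := by
  simp only [phi, inv_inv]
  ring

theorem phi_nonneg (ht : 0 < t) : 0 ≤ phi k t := by
  rcases le_total 1 t with h | h
  · exact phi_nonneg_of_one_le k h
  · rw [← phi_inv]
    exact phi_nonneg_of_one_le k (one_le_inv₀ ht |>.2 h)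

theorem P_sq_eq (y : ℝ) : P (k + 2) y ^ 2 = sqP k (exp (arsinh y) ^ 2) := by
  have hb : 0 ≤ 1 + (k + 1) * exp (arsinh y) ^ 2 := by positivity
  have hrpow : ((1 + (k + 1) * exp (arsinh y) ^ 2) ^ ((k : ℝ) / 2)) ^ 2 =
      (1 + (k + 1) * exp (arsinh y) ^ 2) ^ k := by
    rw [← rpow_natCast _ 2, ← rpow_mul hb]
    norm_num
  rw [P, add_comm √(1 + y ^ 2), ← exp_arsinh, show k + 2 - 1 = k + 1 from rfl]
  push_cast
  rw [show (k + 2 - 1 : ℝ) = k + 1 by ring, show ((k + 2 - 2) / 2 : ℝ) = k / 2 by ring, div_pow,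
    hrpow, sqP, ← pow_mul, ← pow_mul, mul_comm]

end PSqBound

open PSqBound in
theorem P_sq_add_P_sq_le_general (n : ℕ) (hn : 2 ≤ n) (y : ℝ) :
    P n y ^ 2 + P n (-y) ^ 2 ≤
      (2 * (n : ℝ) ^ 2 + 4 * ((n : ℝ) - 1) * (3 * (n : ℝ) - 2) * y ^ 2) / (n : ℝ) ^ n := by
  obtain ⟨k, rfl⟩ : ∃ k, n = k + 2 := ⟨n - 2, by omega⟩
  have hφ := phi_nonneg k (pow_pos (exp_pos (arsinh y)) 2)
  rw [phi] at hφ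
  calc P (k + 2) y ^ 2 + P (k + 2) (-y) ^ 2
      = sqP k (exp (arsinh y) ^ 2) + sqP k (exp (arsinh y) ^ 2)⁻¹ := by
        rw [P_sq_eq, P_sq_eq, arsinh_neg, exp_neg, inv_pow]
    _ ≤ (2 * (k + 2) ^ 2 + (k + 1) * (3 * k + 4) *
          (exp (arsinh y) ^ 2 - 2 + (exp (arsinh y) ^ 2)⁻¹)) / (k + 2) ^ (k + 2) := by
        linarith
    _ = _ := by
        rw [← four_mul_sq_eq_exp_arsinh]
        push_cast
        ring

/-- `𝒫_n(y)² + 𝒫_n(-y)² ≤ (2n² + 4(n-1)(3n-2)y²)/nⁿ`. -/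
theorem P_sq_add_P_sq_le (n : ℕ) (hn : 2 ≤ n) (y : ℝ) (hy : 0 ≤ y) :
    P n y ^ 2 + P n (-y) ^ 2 ≤
      (2 * (n : ℝ) ^ 2 + 4 * ((n : ℝ) - 1) * (3 * (n : ℝ) - 2) * y ^ 2) / (n : ℝ) ^ n :=
  P_sq_add_P_sq_le_general n hn y
end
end

section
/- For every real x ≥ 0 and every integer n ≥ 2, Σ_{k=3}^{n+1} C(n+1, k) · [ 1/(n+x)^{k−2} + (−1)^k/(1+nx)^{k−2} ] · (1−x)^k ≤ 0, with equality if and only if x = 1. (For n = 2 the sum runs over k = 3; in general it runs over 3 ≤ k ≤ n+1.) -/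
/-!
With `a = (1 - x) / (n + x)` and `b = (x - 1) / (1 + n x)` the sum equals `(1 - x)^2 (G a + G b)`,
where `G t = ∑_{k ≥ 3} C(n+1, k) t^(k-2)` is `binomTail (n + 1)`. Since `1/a + 1/b = n - 1`, the
negative one of `a, b` is `-v` with `0 < v ≤ 1` and the other is `v / (1 + (n - 1) v)`; clearing
denominators turns `G a + G b < 0` into a polynomial inequality in `v`. Both of its sides telescope
into sums over `i ≤ n` that are compared termwise; the termwise bound is an induction on `i` whose
step rests on `(1 + t)^i ≤ exp (i t) ≤ (2 + i t) / (2 - i t)`.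
-/

open Finset Real

lemma one_add_pow_le_two_add_div_two_sub {t : ℝ} (ht : 0 ≤ t) {i : ℕ} (hit : i * t < 2) :
    (1 + t) ^ i ≤ (2 + i * t) / (2 - i * t) :=
  calc (1 + t) ^ i ≤ exp t ^ i := by gcongr; linarith [add_one_le_exp t]
    _ = exp (i * t) := (exp_nat_mul t i).symm
    _ ≤ (2 + i * t) / (2 - i * t) := exp_le_two_add_div_two_sub (by positivity) hit

lemma two_add_mul_mul_pow_le {k i : ℕ} (hik : i ≤ k) {v : ℝ} (hv : 0 ≤ v) :
    (2 + k * v) * (1 + k * v + v) ^ i ≤ (1 + k * v) ^ i * (2 + k * v + 2 * i * v) := by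
  set B := 1 + k * v
  have hB : 0 < B := by positivity
  have hik' : (i : ℝ) ≤ k := by exact_mod_cast hik
  have hiv : i * v < 2 * B := by nlinarith
  have hpow : (B + v) ^ i * (2 * B - i * v) ≤ (2 * B + i * v) * B ^ i := by
    have h := one_add_pow_le_two_add_div_two_sub (div_nonneg hv hB.le) (i := i)
      (by rwa [mul_div_assoc', div_lt_iff₀ hB])
    have e : (2 + i * (v / B)) / (2 - i * (v / B)) = (2 * B + i * v) / (2 * B - i * v) := by
      field_simp
    rwa [e, one_add_div hB.ne', div_pow, div_le_div_iff₀ (by positivity) (by linarith)] at h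
  have hrat : (2 + k * v) * (2 * B + i * v) ≤ (2 + k * v + 2 * i * v) * (2 * B - i * v) := by
    nlinarith [mul_nonneg (mul_nonneg (Nat.cast_nonneg i) (sq_nonneg v)) (sub_nonneg.2 hik')]
  refine le_of_mul_le_mul_right ?_ (by linarith : 0 < 2 * B - i * v)
  calc (2 + k * v) * (B + v) ^ i * (2 * B - i * v) ≤ (2 + k * v) * ((2 * B + i * v) * B ^ i) := by
        rw [mul_assoc]; gcongr
    _ ≤ _ := by nlinarith [pow_pos hB i]

lemma one_add_mul_mul_pow_le (k : ℕ) {v : ℝ} (hv : 0 ≤ v) (hv1 : v ≤ 1) {i : ℕ}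
    (hi : i ≤ k + 1) :
    (1 + k * v) * (1 + k * v + v) ^ i ≤ (1 + k * v) ^ i * ((1 - v) ^ i + (k + 2 * i) * v) := by
  induction i with
  | zero => simp
  | succ i ih =>
    set B := 1 + k * v
    have hB : 0 ≤ B := by positivity
    calc B * (B + v) ^ (i + 1)
        = (B * (1 - v)) * (B * (B + v) ^ i) + (v * B) * ((2 + k * v) * (B + v) ^ i) := by ring
      _ ≤ (B * (1 - v)) * (B ^ i * ((1 - v) ^ i + (k + 2 * i) * v))
            + (v * B) * (B ^ i * (2 + k * v + 2 * i * v)) := by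
          have hB1 : 0 ≤ B * (1 - v) := mul_nonneg hB (by linarith)
          have hstep := two_add_mul_mul_pow_le (k := k) (by omega : i ≤ k) hv
          exact add_le_add (mul_le_mul_of_nonneg_left (ih (by omega)) hB1)
            (mul_le_mul_of_nonneg_left hstep (by positivity))
      _ = B ^ (i + 1) * ((1 - v) ^ (i + 1) + (k + 2 * (i + 1 : ℕ)) * v) := by
          push_cast; ring

lemma pow_add_one_sub_pow_mul_lt {k : ℕ} (hk : 1 ≤ k) {v : ℝ} (hv : 0 < v) (hv1 : v ≤ 1) :
    (1 + k * v + v) ^ (k + 2) + (1 - v) ^ (k + 2) * (1 + k * v) ^ k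
      < (1 + k * v) ^ (k + 2) + (1 + k * v) ^ k
        + (k + 2) * (2 * k + 1) * v ^ 2 * (1 + k * v) ^ k := by
  set B := 1 + k * v
  have hB : 0 < B := by positivity
  have hterm : ∀ i ∈ range (k + 2),
      (B + v) ^ i * B ^ (k + 1 - i) ≤ B ^ k * ((1 - v) ^ i + (k + 2 * i) * v) := by
    intro i hi
    have hik : i ≤ k + 1 := Nat.lt_succ_iff.mp (mem_range.mp hi)
    refine le_of_mul_le_mul_left ?_ hB
    calc B * ((B + v) ^ i * B ^ (k + 1 - i)) = B * (B + v) ^ i * B ^ (k + 1 - i) := by ring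
      _ ≤ B ^ i * ((1 - v) ^ i + (k + 2 * i) * v) * B ^ (k + 1 - i) :=
          mul_le_mul_of_nonneg_right (one_add_mul_mul_pow_le k hv.le hv1 hik) (by positivity)
      _ = B * (B ^ k * ((1 - v) ^ i + (k + 2 * i) * v)) := by
          rw [mul_right_comm, ← pow_add, Nat.add_sub_cancel' hik, pow_succ']; ring
  have hterm_two : (B + v) ^ 2 * B ^ (k + 1 - 2) < B ^ k * ((1 - v) ^ 2 + (k + 2 * 2) * v) := by
    have hk' : (0 : ℝ) < k := by exact_mod_cast hk
    have hsq : (B + v) ^ 2 + k * v ^ 3 = B * ((1 - v) ^ 2 + (k + 2 * 2) * v) := by ring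
    have hBk : B ^ k = B * B ^ (k + 1 - 2) := by rw [← pow_succ']; congr 1; omega
    calc (B + v) ^ 2 * B ^ (k + 1 - 2) < ((B + v) ^ 2 + k * v ^ 3) * B ^ (k + 1 - 2) := by
          gcongr; linarith [show 0 < k * v ^ 3 by positivity]
      _ = _ := by rw [hsq, hBk]; ring
  have hsum := sum_lt_sum hterm ⟨2, mem_range.2 (by omega), hterm_two⟩
  have hgeomAB : (∑ i ∈ range (k + 2), (B + v) ^ i * B ^ (k + 1 - i)) * v
      = (B + v) ^ (k + 2) - B ^ (k + 2) := by
    simpa using geom_sum₂_mul (B + v) B (k + 2)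
  have hgeom : v * ∑ i ∈ range (k + 2), (1 - v) ^ i = 1 - (1 - v) ^ (k + 2) := by
    simpa using mul_neg_geom_sum (1 - v) (k + 2)
  have hlin : ∀ n : ℕ, ∑ i ∈ range n, ((k : ℝ) + 2 * i) = n * (k + n - 1) := by
    intro n
    induction n with
    | zero => simp
    | succ n ih => rw [sum_range_succ, ih]; push_cast; ring
  rw [← mul_sum, sum_add_distrib, ← sum_mul, hlin] at hsum
  have key := mul_lt_mul_of_pos_right hsum hv
  rw [hgeomAB] at key
  push_cast at key
  linear_combination key + B ^ k * hgeom

def binomTail (m : ℕ) (t : ℝ) : ℝ :=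
  ∑ j ∈ Icc 3 m, (m.choose j : ℝ) * t ^ (j - 2)

lemma sq_mul_binomTail {m : ℕ} (hm : 2 ≤ m) (t : ℝ) :
    t ^ 2 * binomTail m t = (1 + t) ^ m - (1 + m * t + m.choose 2 * t ^ 2) := by
  have h := add_pow t 1 m
  rw [← sum_range_add_sum_Ico _ (show 3 ≤ m + 1 by omega), Ico_add_one_right_eq_Icc] at h
  simp only [sum_range_succ, sum_range_zero, one_pow, mul_one, pow_zero, pow_one,
    Nat.choose_zero_right, Nat.choose_one_right, Nat.cast_one, zero_add] at h
  have htail : t ^ 2 * binomTail m t = ∑ j ∈ Icc 3 m, t ^ j * (m.choose j : ℝ) := by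
    rw [binomTail, mul_sum]
    refine sum_congr rfl fun j hj => ?_
    rw [mul_left_comm, ← pow_add, Nat.add_sub_cancel' (by linarith [(mem_Icc.mp hj).1])]
    ring
  rw [htail, add_comm 1 t, h]
  ring

lemma binomTail_add_binomTail_neg_lt_zero {k : ℕ} (hk : 1 ≤ k) {v : ℝ} (hv : 0 < v)
    (hv1 : v ≤ 1) :
    binomTail (k + 2) (v / (1 + k * v)) + binomTail (k + 2) (-v) < 0 := by
  have hpoly := pow_add_one_sub_pow_mul_lt hk hv hv1
  have hneg := sq_mul_binomTail (m := k + 2) (by omega) (-v)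
  set B := 1 + k * v
  have hB : 0 < B := by positivity
  have hB_succ : B ^ (k + 1) = B ^ k * (1 + k * v) := pow_succ B k
  set s := v / B
  have hv_eq : v = s * B := (div_mul_cancel₀ v hB.ne').symm
  have hpos := sq_mul_binomTail (m := k + 2) (by omega) s
  clear_value s B
  have hC : ((k + 2).choose 2 : ℝ) = (k + 2) * (k + 1) / 2 := by
    rw [Nat.cast_choose_two]; push_cast; ring
  have hpos_term : v ^ 2 * B ^ k * binomTail (k + 2) s
      = (B + v) ^ (k + 2) - B ^ (k + 2) - (k + 2) * v * B ^ (k + 1)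
        - ((k + 2).choose 2 : ℝ) * v ^ 2 * B ^ k := by
    rw [show B + v = (1 + s) * B by rw [hv_eq]; ring, mul_pow, hv_eq]
    push_cast at hpos ⊢
    linear_combination B ^ (k + 2) * hpos
  have hneg_term : v ^ 2 * B ^ k * binomTail (k + 2) (-v)
      = B ^ k * ((1 - v) ^ (k + 2) - 1 + (k + 2) * v - ((k + 2).choose 2 : ℝ) * v ^ 2) := by
    push_cast at hneg
    linear_combination B ^ k * hneg
  refine neg_of_mul_neg_right (a := v ^ 2 * B ^ k) ?_ (by positivity)
  rw [mul_add, hpos_term, hneg_term, hB_succ, hC]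
  linear_combination hpoly

lemma binomTail_add_binomTail_lt_zero {n : ℕ} (hn : 2 ≤ n) {x : ℝ} (hx : 0 ≤ x)
    (hx1 : x ≠ 1) :
    binomTail (n + 1) ((1 - x) / (n + x)) + binomTail (n + 1) ((x - 1) / (1 + n * x)) < 0 := by
  obtain ⟨k, rfl⟩ : ∃ k, n = k + 1 := ⟨n - 1, by omega⟩
  have hk : 1 ≤ k := by omega
  push_cast
  have hP : 0 < k + 1 + x := by positivity
  have hQ : 0 < 1 + (k + 1) * x := by positivity
  rcases hx1.lt_or_gt with hlt | hgt
  · have h := binomTail_add_binomTail_neg_lt_zero hk (v := (1 - x) / (1 + (k + 1) * x))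
      (div_pos (by linarith) hQ) ((div_le_one hQ).2 (by nlinarith))
    convert h using 3
    · field_simp; ring
    · ring
  · have h := binomTail_add_binomTail_neg_lt_zero hk (v := (x - 1) / (k + 1 + x))
      (div_pos (by linarith) hP) ((div_le_one hP).2 (by linarith))
    rw [add_comm]
    convert h using 3
    · field_simp; ring
    · ring

/-- the binomial-sum form of the algebraic inequality, with equality
exactly at `x = 1`. -/
theorem binomial_sum_inequality (n : ℕ) (hn : 2 ≤ n) (x : ℝ) (hx : 0 ≤ x) :
    (∑ k ∈ Finset.Icc 3 (n + 1), (Nat.choose (n + 1) k : ℝ) *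
        (1 / ((n : ℝ) + x) ^ (k - 2) + (-1) ^ k / (1 + (n : ℝ) * x) ^ (k - 2)) *
        (1 - x) ^ k) ≤ 0 ∧
    ((∑ k ∈ Finset.Icc 3 (n + 1), (Nat.choose (n + 1) k : ℝ) *
        (1 / ((n : ℝ) + x) ^ (k - 2) + (-1) ^ k / (1 + (n : ℝ) * x) ^ (k - 2)) *
        (1 - x) ^ k) = 0 ↔ x = 1) := by
  have hsum : ∑ k ∈ Finset.Icc 3 (n + 1), (Nat.choose (n + 1) k : ℝ) *
        (1 / ((n : ℝ) + x) ^ (k - 2) + (-1) ^ k / (1 + (n : ℝ) * x) ^ (k - 2)) * (1 - x) ^ k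
      = (1 - x) ^ 2 * (binomTail (n + 1) ((1 - x) / (n + x))
          + binomTail (n + 1) ((x - 1) / (1 + n * x))) := by
    rw [binomTail, binomTail, ← sum_add_distrib, mul_sum]
    refine sum_congr rfl fun k hk => ?_
    obtain ⟨j, rfl⟩ : ∃ j, k = j + 2 := ⟨k - 2, by have := (mem_Icc.mp hk).1; omega⟩
    rw [Nat.add_sub_cancel, div_pow, div_pow, show x - 1 = -(1 - x) by ring, neg_pow (1 - x)]
    field_simp
    ring
  rw [hsum]
  by_cases hx1 : x = 1
  · subst hx1
    simp
  · have hneg := mul_neg_of_pos_of_neg (sq_pos_of_ne_zero (sub_ne_zero.2 (Ne.symm hx1)))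
      (binomTail_add_binomTail_lt_zero hn hx hx1)
    exact ⟨hneg.le, iff_of_false hneg.ne hx1⟩
end

section
/- For every integer n ≥ 2 and every real y, 𝒫_n(y) · 𝒫_n(−y) = (4(n−1)y² + n²)^{(2−n)/2}; in particular 𝒫_n(y) · 𝒫_n(−y) ≤ n^{2−n}. -/
/-!
Write `t = √(1+y²) + y`. Then `√(1+y²) - y = t⁻¹`, so `𝒫_n(y) 𝒫_n(-y)` is the value of
`t ↦ t^{n-1} / (1+(n-1)t²)^{(n-2)/2}` at `t` times its value at `t⁻¹`. The numerators multiply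
to `1`, and for `ab = 1` one has `(1+ca²)(1+cb²) = (c+1)² + c(a-b)²`, which with `c = n-1` and
`a - b = 2y` is `n² + 4(n-1)y²`. The bound follows since this base is at least `n²` and the
exponent `(2-n)/2` is nonpositive.
-/

noncomputable section

open Real

lemma sqrt_one_add_sq_add_mul_sub (y : ℝ) : (√(1 + y ^ 2) + y) * (√(1 + y ^ 2) - y) = 1 := by
  have := sq_sqrt (by positivity : (0 : ℝ) ≤ 1 + y ^ 2)
  linear_combination this

lemma one_add_mul_sq_mul_one_add_mul_sq {a b : ℝ} (hab : a * b = 1) (c : ℝ) :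
    (1 + c * a ^ 2) * (1 + c * b ^ 2) = (c + 1) ^ 2 + c * (a - b) ^ 2 := by
  linear_combination (c ^ 2 * (a * b + 1) + 2 * c) * hab

def profile (n : ℕ) (t : ℝ) : ℝ :=
  t ^ (n - 1) / (1 + ((n : ℝ) - 1) * t ^ 2) ^ (((n : ℝ) - 2) / 2)

lemma P_eq_profile (n : ℕ) (y : ℝ) : P n y = profile n (√(1 + y ^ 2) + y) := rfl

lemma P_neg_eq_profile (n : ℕ) (y : ℝ) : P n (-y) = profile n (√(1 + y ^ 2) - y) := by
  rw [P, profile, neg_sq, ← sub_eq_add_neg]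

lemma profile_mul_profile_of_mul_eq_one {n : ℕ} (hn : 1 ≤ n) {a b : ℝ} (hab : a * b = 1) :
    profile n a * profile n b =
      ((1 + ((n : ℝ) - 1) * a ^ 2) * (1 + ((n : ℝ) - 1) * b ^ 2)) ^ ((2 - (n : ℝ)) / 2) := by
  have hc : (0 : ℝ) ≤ (n : ℝ) - 1 := by
    have : (1 : ℝ) ≤ n := by exact_mod_cast hn
    linarith
  rw [profile, profile, div_mul_div_comm, ← mul_pow, hab, one_pow,
    ← mul_rpow (by positivity) (by positivity), one_div, ← rpow_neg (by positivity)]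
  ring_nf

lemma P_mul_P_neg_eq {n : ℕ} (hn : 1 ≤ n) (y : ℝ) :
    P n y * P n (-y) = (4 * ((n : ℝ) - 1) * y ^ 2 + (n : ℝ) ^ 2) ^ ((2 - (n : ℝ)) / 2) := by
  have hab := sqrt_one_add_sq_add_mul_sub y
  rw [P_eq_profile, P_neg_eq_profile, profile_mul_profile_of_mul_eq_one hn hab,
    one_add_mul_sq_mul_one_add_mul_sq hab]
  ring_nf

lemma add_sq_rpow_le {n : ℕ} (hn : 2 ≤ n) {x : ℝ} (hx : 0 ≤ x) :
    (x + (n : ℝ) ^ 2) ^ ((2 - (n : ℝ)) / 2) ≤ (n : ℝ) ^ (2 - (n : ℝ)) := by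
  have hn' : (2 : ℝ) ≤ n := by exact_mod_cast hn
  calc (x + (n : ℝ) ^ 2) ^ ((2 - (n : ℝ)) / 2)
      ≤ ((n : ℝ) ^ 2) ^ ((2 - (n : ℝ)) / 2) :=
        rpow_le_rpow_of_nonpos (by positivity) (by linarith) (by linarith)
    _ = (n : ℝ) ^ (2 - (n : ℝ)) := by
        rw [← rpow_natCast (n : ℝ) 2, ← rpow_mul (by positivity)]
        ring_nf

/-- `𝒫_n(y)·𝒫_n(-y) = (4(n-1)y² + n²)^{(2-n)/2} ≤ n^{2-n}`. -/
theorem P_mul_P_neg (n : ℕ) (hn : 2 ≤ n) (y : ℝ) :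
    P n y * P n (-y) = (4 * ((n : ℝ) - 1) * y ^ 2 + (n : ℝ) ^ 2) ^ ((2 - (n : ℝ)) / 2) ∧
    P n y * P n (-y) ≤ (n : ℝ) ^ (2 - (n : ℝ)) := by
  have h := P_mul_P_neg_eq (n := n) (by omega) y
  have hn' : (1 : ℝ) ≤ n := by exact_mod_cast (by omega : 1 ≤ n)
  exact ⟨h, h ▸ add_sq_rpow_le hn (by nlinarith [sq_nonneg y])⟩
end
end

section
/- For every integer n ≥ 2 and every real y ≥ 0, (𝒫_n(y) + 𝒫_n(−y))² ≤ (4 / n^{n−2}) · (1 + ((n−1)(3n−2)/n²) · y²). -/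
/-!
With `t = √(1+y²)+y` one has `√(1+y²)-y = t⁻¹`, so `𝒫_n(-y)` is `𝒫_n(y)` with `t`
replaced by `t⁻¹`. By AM-GM the cross term `𝒫_n(y)𝒫_n(-y)` is at most `n^{-(n-2)}`. Writing
`t² = 1 + n e` and `k = n - 2`, the two squares reduce, after clearing the factor `n^k t²`, to
  `(1+ne)^n / (1+(n-1)e)^k + (1+e)^{-k} ≤ 2(1+ne) + (n-1)(3n-2)e²`,
which is sharp to second order at `e = 0`. It follows from a quartic upper bound for
`(1-u)^{-k}` at `u = e/(1+ne)` and a Padé-type upper bound for `(1+e)^{-k}`, both proved by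
induction on `k`; what is left is a polynomial identity whose gap is
`k(k+1)(k+2)(k+3)² e⁵ / 24`.
-/

noncomputable section

open Real

lemma one_add_pow_le (m : ℕ) {e : ℝ} (he : 0 ≤ e) :
    (1 + e) ^ m ≤ 1 + m * e + m * (m - 1) / 2 * e ^ 2 * (1 + e) ^ m := by
  induction m with
  | zero => simp
  | succ m ih =>
    have hpow : 1 ≤ (1 + e) ^ m * (1 + e) := by
      rw [← pow_succ]
      exact one_le_pow₀ (by linarith)
    have step := mul_le_mul_of_nonneg_right ih (by linarith : 0 ≤ 1 + e)
    have hm := mul_le_mul_of_nonneg_left hpow (by positivity : (0 : ℝ) ≤ m * e ^ 2)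
    push_cast
    rw [pow_succ]
    linear_combination step + hm

lemma cubic_mul_one_add_pow_le (k : ℕ) {e : ℝ} (he : 0 ≤ e) :
    k * (k + 1) * (k + 2) / 6 * e ^ 3 * (1 + e) ^ k ≤
      (1 + (k + 1) / 2 * e) * ((1 - k * e + k * (k + 1) / 2 * e ^ 2) * (1 + e) ^ k - 1) := by
  induction k with
  | zero => norm_num
  | succ k ih =>
    have hA := mul_le_mul_of_nonneg_left (one_add_pow_le (k + 1) he) (by linarith : 0 ≤ e / 2)
    have ih' := mul_le_mul_of_nonneg_left ih (by linarith : 0 ≤ 1 + e)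
    push_cast at hA ⊢
    rw [pow_succ] at hA ⊢
    linear_combination ih' + hA

lemma one_le_quartic_mul_one_sub_pow (k : ℕ) {u : ℝ} (hu : 0 ≤ u) (hku : u * (k + 2) ≤ 1) :
    1 ≤ (1 + k * u + k * (k + 1) / 2 * u ^ 2 + k * (k + 1) * (k + 2) / 6 * u ^ 3
        + k * (k + 1) * (k + 2) * (k + 3) / 12 * u ^ 4) * (1 - u) ^ k := by
  induction k with
  | zero => norm_num
  | succ k ih =>
    push_cast at hku ⊢
    have ih := ih (by nlinarith)
    have h1u : 0 ≤ 1 - u := by nlinarith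
    have hstep : 0 ≤ u ^ 4 * ((k + 1) * (k + 2) * (k + 3)) * (2 - (k + 4) * u) :=
      mul_nonneg (by positivity) (by nlinarith)
    have := mul_le_mul_of_nonneg_right hstep (pow_nonneg h1u k)
    rw [pow_succ]
    linear_combination ih + this / 12

lemma one_add_mul_pow_div_add_inv_pow_le (k : ℕ) {e : ℝ} (he : 0 ≤ e) :
    (1 + (k + 2) * e) ^ (k + 2) / (1 + (k + 1) * e) ^ k + ((1 + e) ^ k)⁻¹ ≤
      2 * (1 + (k + 2) * e) + (k + 1) * (3 * k + 4) * e ^ 2 := by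
  set b : ℝ := 1 + (k + 2) * e with hb
  have hb0 : 0 < b := by positivity
  have hγ : 0 < 1 + (k + 1) / 2 * e := by positivity
  set p := 1 + k * (e / b) + k * (k + 1) / 2 * (e / b) ^ 2 + k * (k + 1) * (k + 2) / 6 * (e / b) ^ 3
    + k * (k + 1) * (k + 2) * (k + 3) / 12 * (e / b) ^ 4 with hp
  set q := 1 - k * e + k * (k + 1) / 2 * e ^ 2 with hq
  have hfirst : b ^ (k + 2) / (1 + (k + 1) * e) ^ k ≤ b ^ 2 * p := by
    have h := one_le_quartic_mul_one_sub_pow k (u := e / b) (by positivity)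
      (by rw [div_mul_eq_mul_div, div_le_one hb0]; linarith)
    rw [show 1 - e / b = (1 + (k + 1) * e) / b by field_simp; ring,
      ← inv_le_iff_one_le_mul₀ (by positivity), ← inv_pow, inv_div] at h
    rw [pow_add, mul_comm, mul_div_assoc, ← div_pow]
    gcongr
  have hsecond :
      ((1 + e) ^ k)⁻¹ ≤ q - k * (k + 1) * (k + 2) / 6 * e ^ 3 / (1 + (k + 1) / 2 * e) := by
    rw [inv_le_iff_one_le_mul₀ (by positivity), sub_mul, div_mul_eq_mul_div, le_sub_comm,
      div_le_iff₀ hγ]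
    linear_combination cubic_mul_one_add_pow_le k he
  have hgap : b ^ 2 * p + (q - k * (k + 1) * (k + 2) / 6 * e ^ 3 / (1 + (k + 1) / 2 * e)) =
      2 * b + (k + 1) * (3 * k + 4) * e ^ 2
        - k * (k + 1) * (k + 2) * (k + 3) ^ 2 / 24 * e ^ 5 / ((1 + (k + 1) / 2 * e) * b ^ 2) := by
    rw [hp, hq, hb]
    field_simp
    ring
  have : 0 ≤ k * (k + 1) * (k + 2) * (k + 3) ^ 2 / 24 * e ^ 5 /
      ((1 + (k + 1) / 2 * e) * b ^ 2) := by
    positivity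
  linarith

lemma pow_div_add_inv_pow_div_le (k : ℕ) {x : ℝ} (hx : 1 ≤ x) :
    x ^ (k + 1) / (1 + (k + 1) * x) ^ k + x⁻¹ ^ (k + 1) / (1 + (k + 1) * x⁻¹) ^ k ≤
      (2 + (k + 1) * (3 * k + 4) / (k + 2) ^ 2 * ((x - 1) ^ 2 / x)) / (k + 2) ^ k := by
  obtain ⟨e, he, hxe⟩ : ∃ e : ℝ, 0 ≤ e ∧ x = 1 + (k + 2) * e :=
    ⟨(x - 1) / (k + 2), by have := sub_nonneg.2 hx; positivity, by field_simp; ring⟩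
  have hx0 : 0 < x := by linarith
  have h1 : 1 + (k + 1) * x = (k + 2) * (1 + (k + 1) * e) := by rw [hxe]; ring
  have h2 : 1 + (k + 1) * x⁻¹ = (k + 2) * (1 + e) / x := by field_simp; rw [hxe]; ring
  have h3 : x - 1 = (k + 2) * e := by rw [hxe]; ring
  calc _ = (x ^ (k + 2) / (1 + (k + 1) * e) ^ k + ((1 + e) ^ k)⁻¹) / (x * (k + 2) ^ k) := by
        rw [h1, h2, div_pow, inv_pow, div_div_eq_mul_div, mul_pow, mul_pow]
        field_simp
        ring
    _ ≤ (2 * x + (k + 1) * (3 * k + 4) * e ^ 2) / (x * (k + 2) ^ k) :=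
        div_le_div_of_nonneg_right (hxe ▸ one_add_mul_pow_div_add_inv_pow_le k he) (by positivity)
    _ = _ := by
        rw [h3]
        field_simp

/-- `𝒫_{k+2}` in the variable `t = √(1+y²)+y`, in which `y ↦ -y` becomes `t ↦ t⁻¹`. -/
def Pt (k : ℕ) (t : ℝ) : ℝ := t ^ (k + 1) / √(1 + (k + 1) * t ^ 2) ^ k

lemma P_add_two_eq_Pt (k : ℕ) (y : ℝ) : P (k + 2) y = Pt k (√(1 + y ^ 2) + y) := by
  rw [P, Pt]
  push_cast
  rw [show ((k : ℝ) + 2 - 2) / 2 = 1 / 2 * k by ring, show (k : ℝ) + 2 - 1 = k + 1 by ring,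
    rpow_mul_natCast (by positivity), ← sqrt_eq_rpow]

lemma inv_sqrt_one_add_sq_add (y : ℝ) : (√(1 + y ^ 2) + y)⁻¹ = √(1 + y ^ 2) - y := by
  refine inv_eq_of_mul_eq_one_right ?_
  nlinarith [sq_sqrt (by positivity : (0 : ℝ) ≤ 1 + y ^ 2)]

lemma P_add_two_neg_eq_Pt_inv (k : ℕ) (y : ℝ) :
    P (k + 2) (-y) = Pt k (√(1 + y ^ 2) + y)⁻¹ := by
  rw [P_add_two_eq_Pt, inv_sqrt_one_add_sq_add, neg_sq, sub_eq_add_neg]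

lemma Pt_sq (k : ℕ) (t : ℝ) : Pt k t ^ 2 = (t ^ 2) ^ (k + 1) / (1 + (k + 1) * t ^ 2) ^ k := by
  rw [Pt, div_pow, ← pow_mul, ← pow_mul, mul_comm k 2, pow_mul _ 2 k, sq_sqrt (by positivity),
    mul_comm (k + 1) 2, pow_mul]

lemma Pt_mul_Pt_inv_le (k : ℕ) {t : ℝ} (ht : t ≠ 0) :
    Pt k t * Pt k t⁻¹ ≤ (((k : ℝ) + 2) ^ k)⁻¹ := by
  have hamgm : ((k : ℝ) + 2) ^ 2 ≤ (1 + (k + 1) * t ^ 2) * (1 + (k + 1) * t⁻¹ ^ 2) := by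
    have h : (1 + (k + 1) * t ^ 2) * (1 + (k + 1) * t⁻¹ ^ 2) =
        (k + 2) ^ 2 + (k + 1) * (t - t⁻¹) ^ 2 := by
      field_simp
      ring
    rw [h]
    have : (0 : ℝ) ≤ (k + 1) * (t - t⁻¹) ^ 2 := by positivity
    linarith
  rw [Pt, Pt, div_mul_div_comm, ← mul_pow, ← mul_pow, mul_inv_cancel₀ ht, one_pow, one_div,
    ← sqrt_mul (by positivity)]
  gcongr
  exact le_sqrt_of_sq_le hamgm

lemma Pt_sq_add_Pt_inv_sq_le (k : ℕ) {t : ℝ} (ht : 1 ≤ t) :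
    Pt k t ^ 2 + Pt k t⁻¹ ^ 2 ≤
      (2 + (k + 1) * (3 * k + 4) / (k + 2) ^ 2 * (t - t⁻¹) ^ 2) / (k + 2) ^ k := by
  have ht0 : t ≠ 0 := by positivity
  rw [Pt_sq, Pt_sq, inv_pow, show (t - t⁻¹) ^ 2 = (t ^ 2 - 1) ^ 2 / t ^ 2 by field_simp]
  exact pow_div_add_inv_pow_div_le k (one_le_pow₀ ht)

/-- `(𝒫_n(y) + 𝒫_n(-y))² ≤ (4/n^{n-2})(1 + ((n-1)(3n-2)/n²) y²)`. -/
theorem P_add_P_neg_sq_le (n : ℕ) (hn : 2 ≤ n) (y : ℝ) (hy : 0 ≤ y) :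
    (P n y + P n (-y)) ^ 2 ≤
      4 / (n : ℝ) ^ (n - 2) *
        (1 + ((n : ℝ) - 1) * (3 * (n : ℝ) - 2) / (n : ℝ) ^ 2 * y ^ 2) := by
  obtain ⟨k, rfl⟩ : ∃ k, n = k + 2 := ⟨n - 2, by omega⟩
  rw [P_add_two_eq_Pt, P_add_two_neg_eq_Pt_inv, add_sq']
  set t := √(1 + y ^ 2) + y with ht
  have ht1 : 1 ≤ t := by
    have : 1 ≤ √(1 + y ^ 2) := one_le_sqrt.2 (by nlinarith)
    linarith
  have hty : t - t⁻¹ = 2 * y := by rw [ht, inv_sqrt_one_add_sq_add]; ring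
  calc _ ≤ Pt k t ^ 2 + Pt k t⁻¹ ^ 2 + 2 * (((k : ℝ) + 2) ^ k)⁻¹ := by
        linarith [Pt_mul_Pt_inv_le k (by positivity : t ≠ 0)]
    _ ≤ (2 + (k + 1) * (3 * k + 4) / (k + 2) ^ 2 * (t - t⁻¹) ^ 2) / (k + 2) ^ k
          + 2 * (((k : ℝ) + 2) ^ k)⁻¹ :=
        add_le_add_left (Pt_sq_add_Pt_inv_sq_le k ht1) _
    _ = _ := by
        rw [hty]
        push_cast
        ring
end
end
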